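/- For every map u from the set of edges to {−1,1}, every integer x, and every integer t ≥ 1: a₁(x,t+1,u) = (1/√2)·u(x+1/2, t+1/2)·(a₁(x+1,t,u) + a₂(x+1,t,u)) and a₂(x,t+1,u) = (1/√2)·u(x−1/2, t+1/2)·(a₂(x−1,t,u) − a₁(x−1,t,u)). -/

import Mathlib

open scoped BigOperators

/-- The final x-coordinate of a checker path from `(0,0)` encoded by its sequence of moves
(`true` = move `(1,1)`, `false` = move `(-1,1)`). -/
def moveEndpoint {n : ℕ} (d : Fin n → Bool) : ℤ :=
  ∑ k, (if d k then (1 : ℤ) else -1)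

/-- The number of turns of a checker path encoded by its sequence of moves. -/
def nturns {n : ℕ} (d : Fin n → Bool) : ℕ :=
  ((List.ofFn d).zip (List.ofFn d).tail).countP fun p => p.1 != p.2

/-- Checker paths from `(0,0)` to `(x,t)` whose first step is to `(1,1)`,
encoded by their sequences of moves. -/
def cpaths (x t : ℤ) : Finset (Fin t.toNat → Bool) :=
  Finset.univ.filter fun d => moveEndpoint d = x ∧ (List.ofFn d).headI = true

/-- The x-coordinate of the `k`-th point of the path encoded by moves `d`. -/
def cpos {n : ℕ} (d : Fin n → Bool) (k : Fin n) : ℤ :=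
  ∑ j ∈ Finset.univ.filter (fun j : Fin n => (j : ℕ) < (k : ℕ)), (if d j then (1 : ℤ) else -1)

/-- Product of the values of the field `u` over the edges of the path encoded by `d`.
Here `u x t` denotes the value of the field on the edge with midpoint `(x + 1/2, t + 1/2)`. -/
def fieldWeight (u : ℤ → ℤ → ℝ) {n : ℕ} (d : Fin n → Bool) : ℝ :=
  ∏ k : Fin n, (if d k then u (cpos d k) (k : ℕ) else u (cpos d k - 1) (k : ℕ))

/-- Feynman checkers amplitude `a(x,t,u)` in an external field `u`, where `u x t` is
the value of the field on the edge with midpoint `(x + 1/2, t + 1/2)`. -/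
noncomputable def af (u : ℤ → ℤ → ℝ) (x t : ℤ) : ℂ :=
  (Real.sqrt 2 : ℂ) ^ (1 - t) * Complex.I *
    ∑ d ∈ cpaths x t, (-Complex.I) ^ nturns d * (fieldWeight u d : ℂ)

/-! Split every path by its last move: a path to `(x, t + 1)` is a path to `(x ∓ 1, t)` followed
by one step, which multiplies its term by `u` on the new edge and by `-i` if the step is a turn.
Since every path starts with an up-right move, its number of turns is even exactly when its last
move is up-right too. So the paths ending up-right contribute a real sum `T` and the others a
purely imaginary sum `F`, and `a = c * i * (T + F)` with `c = 2 ^ ((1 - t) / 2)` gives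
`a₁ = -c * Im F`, `a₂ = c * T`; the one-step recursion for `T` and `F` is then the Dirac equation. -/
open Finset Complex

theorem List.countP_zip_tail_append_singleton {α : Type*} (p : α × α → Bool) :
    ∀ (l : List α) (hl : l ≠ []) (b : α),
      ((l ++ [b]).zip (l ++ [b]).tail).countP p =
        (l.zip l.tail).countP p + if p (l.getLast hl, b) then 1 else 0
  | [], hl, _ => absurd rfl hl
  | [a], _, b => by cases h : p (a, b) <;> simp [h]
  | a :: c :: l, _, b => by
      have ih := countP_zip_tail_append_singleton p (c :: l) (List.cons_ne_nil _ _) b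
      simp only [List.cons_append, List.tail_cons, List.zip_cons_cons, List.countP_cons] at ih ⊢
      rw [ih, List.getLast_cons_cons]
      omega

theorem List.ofFn_snoc {α : Type*} {n : ℕ} (d : Fin n → α) (b : α) :
    List.ofFn (Fin.snoc d b : Fin (n + 1) → α) = List.ofFn d ++ [b] := by
  rw [List.ofFn_succ']
  simp [Fin.snoc_castSucc, List.concat_eq_append]

lemma nturns_snoc {n : ℕ} (d : Fin (n + 1) → Bool) (b : Bool) :
    nturns (Fin.snoc d b : Fin (n + 2) → Bool) = nturns d + if d (Fin.last n) != b then 1 else 0 := by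
  rw [nturns, nturns, List.ofFn_snoc,
    List.countP_zip_tail_append_singleton _ _ (by simp), List.getLast_ofFn]
  rfl

lemma even_nturns_iff {n : ℕ} (d : Fin (n + 1) → Bool) :
    Even (nturns d) ↔ d (Fin.last n) = d 0 := by
  induction n with
  | zero => simp [nturns]
  | succ n ih =>
    rw [← Fin.snoc_init_self d, nturns_snoc, Nat.even_add, ih, Fin.snoc_last, Fin.snoc_apply_zero]
    cases d (Fin.last (n + 1)) <;> cases Fin.init d (Fin.last n) <;> cases Fin.init d 0 <;> decide

lemma moveEndpoint_snoc {n : ℕ} (d : Fin n → Bool) (b : Bool) :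
    moveEndpoint (Fin.snoc d b : Fin (n + 1) → Bool) = moveEndpoint d + if b then 1 else -1 := by
  simp [moveEndpoint, Fin.sum_univ_castSucc, Fin.snoc_castSucc]

lemma cpos_snoc_castSucc {n : ℕ} (d : Fin n → Bool) (b : Bool) (k : Fin n) :
    cpos (Fin.snoc d b : Fin (n + 1) → Bool) k.castSucc = cpos d k := by
  simp [cpos, sum_filter, Fin.sum_univ_castSucc, Fin.snoc_castSucc]

lemma cpos_snoc_last {n : ℕ} (d : Fin n → Bool) (b : Bool) :
    cpos (Fin.snoc d b : Fin (n + 1) → Bool) (Fin.last n) = moveEndpoint d := by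
  simp [cpos, moveEndpoint, sum_filter, Fin.sum_univ_castSucc, Fin.snoc_castSucc]

lemma fieldWeight_snoc (u : ℤ → ℤ → ℝ) {n : ℕ} (d : Fin n → Bool) (b : Bool) :
    fieldWeight u (Fin.snoc d b : Fin (n + 1) → Bool) =
      fieldWeight u d * u (if b then moveEndpoint d else moveEndpoint d - 1) n := by
  simp only [fieldWeight, Fin.prod_univ_castSucc, cpos_snoc_castSucc, cpos_snoc_last,
    Fin.snoc_castSucc, Fin.snoc_last, Fin.val_castSucc, Fin.val_last]
  congr 1
  cases b <;> rfl

noncomputable def pathTerm (u : ℤ → ℤ → ℝ) {n : ℕ} (d : Fin n → Bool) : ℂ :=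
  (-I) ^ nturns d * fieldWeight u d

lemma pathTerm_snoc (u : ℤ → ℤ → ℝ) {n : ℕ} (d : Fin (n + 1) → Bool) (b : Bool) :
    pathTerm u (Fin.snoc d b : Fin (n + 2) → Bool) =
      u (if b then moveEndpoint d else moveEndpoint d - 1) (n + 1) *
        ((if d (Fin.last n) = b then 1 else -I) * pathTerm u d) := by
  rw [pathTerm, pathTerm, nturns_snoc, fieldWeight_snoc]
  by_cases h : d (Fin.last n) = b <;> simp [h, pow_succ] <;> ring

lemma pathTerm_im_eq_zero {n : ℕ} (u : ℤ → ℤ → ℝ) (d : Fin (n + 1) → Bool)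
    (h : d (Fin.last n) = d 0) : (pathTerm u d).im = 0 := by
  obtain ⟨k, hk⟩ := (even_nturns_iff d).2 h
  rw [pathTerm, hk, ← two_mul, pow_mul, neg_sq, I_sq]
  norm_cast

lemma pathTerm_re_eq_zero {n : ℕ} (u : ℤ → ℤ → ℝ) (d : Fin (n + 1) → Bool)
    (h : d (Fin.last n) ≠ d 0) : (pathTerm u d).re = 0 := by
  obtain ⟨k, hk⟩ := Nat.not_even_iff_odd.1 (mt (even_nturns_iff d).1 h)
  rw [pathTerm, hk, pow_succ, pow_mul, neg_sq, I_sq, ← ofReal_one, ← ofReal_neg, ← ofReal_pow]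
  simp only [mul_re, mul_im, ofReal_re, ofReal_im, neg_re, neg_im, I_re, I_im]
  ring

noncomputable def pathSum (u : ℤ → ℤ → ℝ) (x : ℤ) (n : ℕ) (b : Bool) : ℂ :=
  ∑ d : Fin (n + 1) → Bool with moveEndpoint d = x ∧ d 0 = true ∧ d (Fin.last n) = b,
    pathTerm u d

lemma pathSum_true_im (u : ℤ → ℤ → ℝ) (x : ℤ) (n : ℕ) : (pathSum u x n true).im = 0 := by
  rw [pathSum, im_sum]
  refine sum_eq_zero fun d hd => pathTerm_im_eq_zero u d ?_
  simp only [mem_filter, mem_univ, true_and] at hd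
  rw [hd.2.1, hd.2.2]

lemma pathSum_false_re (u : ℤ → ℤ → ℝ) (x : ℤ) (n : ℕ) : (pathSum u x n false).re = 0 := by
  rw [pathSum, re_sum]
  refine sum_eq_zero fun d hd => pathTerm_re_eq_zero u d ?_
  simp only [mem_filter, mem_univ, true_and] at hd
  rw [hd.2.1, hd.2.2]
  decide

lemma af_eq_pathSum (u : ℤ → ℤ → ℝ) (x : ℤ) (n : ℕ) :
    af u x (n + 1) = ((√2 ^ n)⁻¹ : ℝ) * I * (pathSum u x n true + pathSum u x n false) := by
  have hscale : ((√2 : ℝ) : ℂ) ^ (1 - ((n : ℤ) + 1)) = ((√2 ^ n)⁻¹ : ℝ) := by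
    rw [show 1 - ((n : ℤ) + 1) = -n by ring, zpow_neg, zpow_natCast]
    norm_cast
  have hsum : ∑ d ∈ cpaths x (n + 1), (-I) ^ nturns d * (fieldWeight u d : ℂ) =
      ∑ d : Fin (n + 1) → Bool with moveEndpoint d = x ∧ d 0 = true, pathTerm u d := by
    simp only [cpaths, List.ofFn_succ, List.headI_cons]
    rfl
  rw [af, hscale, hsum, ← sum_filter_add_sum_filter_not _ fun d => d (Fin.last n) = true,
    filter_filter, filter_filter]
  simp only [pathSum, Bool.not_eq_true, and_assoc]

lemma pathSum_succ (u : ℤ → ℤ → ℝ) (x : ℤ) (n : ℕ) (b : Bool) :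
    pathSum u x (n + 1) b =
      u (if b then x - 1 else x) (n + 1) *
        (pathSum u (x - if b then 1 else -1) n b - I * pathSum u (x - if b then 1 else -1) n !b) := by
  set y := x - if b then 1 else -1
  have hreindex : pathSum u x (n + 1) b =
      ∑ d : Fin (n + 1) → Bool with moveEndpoint d = y ∧ d 0 = true,
        pathTerm u (Fin.snoc d b : Fin (n + 2) → Bool) := by
    have hsnoc : ∀ d : Fin (n + 2) → Bool, d (Fin.last (n + 1)) = b → Fin.snoc (Fin.init d) b = d :=
      fun d hd => hd ▸ Fin.snoc_init_self d
    have hmem : ∀ d : Fin (n + 1) → Bool,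
        moveEndpoint (Fin.snoc d b : Fin (n + 2) → Bool) = x ↔ moveEndpoint d = y := by
      intro d
      rw [moveEndpoint_snoc]
      omega
    refine sum_nbij' Fin.init (fun d => Fin.snoc d b) ?_ ?_ ?_ ?_ ?_ <;>
      simp only [mem_filter, mem_univ, true_and]
    · rintro d ⟨hx, h0, hb⟩
      rw [← hsnoc d hb, hmem] at hx
      rw [← hsnoc d hb, Fin.snoc_apply_zero] at h0
      exact ⟨hx, h0⟩
    · rintro d ⟨hy, h0⟩
      exact ⟨(hmem d).2 hy, by rwa [Fin.snoc_apply_zero], Fin.snoc_last _ _⟩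
    · exact fun d h => hsnoc d h.2.2
    · exact fun d _ => Fin.init_snoc _ _
    · exact fun d h => by rw [hsnoc d h.2.2]
  have hsplit : ∑ d : Fin (n + 1) → Bool with moveEndpoint d = y ∧ d 0 = true,
      (if d (Fin.last n) = b then 1 else -I) * pathTerm u d = pathSum u y n b - I * pathSum u y n !b := by
    simp only [pathSum, ite_mul, one_mul, neg_mul, sum_ite, mul_sum, sum_neg_distrib, filter_filter, and_assoc,
      Bool.eq_not, sub_eq_add_neg]
  rw [hreindex, ← hsplit, mul_sum]
  refine sum_congr rfl fun d hd => ?_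
  simp only [mem_filter, mem_univ, true_and] at hd
  rw [pathTerm_snoc, hd.1]
  cases b <;> simp [y]

theorem dirac_equation_field_general (u : ℤ → ℤ → ℝ)
    (x t : ℤ) (ht : 1 ≤ t) :
    (af u x (t + 1)).re =
      (1 / Real.sqrt 2) * u x t * ((af u (x + 1) t).re + (af u (x + 1) t).im) ∧
    (af u x (t + 1)).im =
      (1 / Real.sqrt 2) * u (x - 1) t * ((af u (x - 1) t).im - (af u (x - 1) t).re) := by
  obtain ⟨n, rfl⟩ : ∃ n : ℕ, t = n + 1 := ⟨(t - 1).toNat, by omega⟩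
  have hsucc : (n : ℤ) + 1 + 1 = ((n + 1 : ℕ) : ℤ) + 1 := by push_cast; ring
  have hscale : (√2 ^ (n + 1))⁻¹ = 1 / √2 * (√2 ^ n)⁻¹ := by
    rw [pow_succ, mul_inv, one_div, mul_comm]
  rw [hsucc, af_eq_pathSum, af_eq_pathSum, af_eq_pathSum, pathSum_succ, pathSum_succ]
  simp only [Bool.not_true, Bool.not_false, if_true, Bool.false_eq_true, if_false, sub_neg_eq_add,
    add_re, add_im, mul_re, mul_im, sub_re, sub_im, I_re, I_im, ofReal_re, ofReal_im,
    pathSum_true_im, pathSum_false_re, hscale]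
  constructor <;> ring

/-- Dirac equation in an external field `u`, where `u x t` is the value of the field on
the edge with midpoint `(x + 1/2, t + 1/2)`. -/
theorem dirac_equation_field (u : ℤ → ℤ → ℝ) (hu : ∀ x t : ℤ, u x t = 1 ∨ u x t = -1)
    (x t : ℤ) (ht : 1 ≤ t) :
    (af u x (t + 1)).re =
      (1 / Real.sqrt 2) * u x t * ((af u (x + 1) t).re + (af u (x + 1) t).im) ∧
    (af u x (t + 1)).im =
      (1 / Real.sqrt 2) * u (x - 1) t * ((af u (x - 1) t).im - (af u (x - 1) t).re) :=
  dirac_equation_field_general u x t ht
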